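/- The set 𝓑 = 𝓑₀ ∪ 𝓑₁ ∪ 𝓑₂ ∪ 𝓑₃ ∪ 𝓑₄ ∪ 𝓑₅ spans MU_v(2) as a K-vector space, where 𝓑₀ = {f^r e^s k^t : r,s ≥ 0, t ∈ ℤ}, 𝓑₁ = {ℓ f^r e^s k^t : r,s ≥ 0, t ∈ ℤ}, 𝓑₂ = {f^r e^s ℓ k^t : r,s ≥ 0, (r,s) ≠ (0,0), t ∈ ℤ}, 𝓑₃ = {ℓ f^r e^s ℓ k^t : r,s ≥ 1, t ∈ ℤ}, 𝓑₄ = {f^r ℓ e^s k^t : r,s ≥ 1, t ∈ ℤ}, 𝓑₅ = {e^s ℓ f^r k^t : r,s ≥ 1, t ∈ ℤ}. -/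

import Mathlib

namespace MirabolicSL2

noncomputable section

/-- The base field `K = ℂ(v)`. -/
abbrev K : Type := RatFunc ℂ

/-- The variable `v ∈ ℂ(v)`. -/
def vv : K := RatFunc.X

/-- The quantum integer `[m] = (v^m - v^{-m})/(v - v⁻¹)`. -/
def qn (m : ℤ) : K := (vv ^ m - vv ^ (-m)) / (vv - vv⁻¹)

/-- The five generators `e, f, k, k⁻¹, ℓ` of mirabolic quantum `sl₂`. -/
inductive G5 : Type | e | f | k | k' | l

open FreeAlgebra in
/-- The defining relations of mirabolic quantum `sl₂`. -/
inductive Rel : FreeAlgebra K G5 → FreeAlgebra K G5 → Prop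
  | kk'  : Rel (ι K G5.k * ι K G5.k') 1
  | k'k  : Rel (ι K G5.k' * ι K G5.k) 1
  | kek' : Rel (ι K G5.k * ι K G5.e * ι K G5.k') ((vv ^ 2) • ι K G5.e)
  | kfk' : Rel (ι K G5.k * ι K G5.f * ι K G5.k') ((vv ^ (-2 : ℤ)) • ι K G5.f)
  | effe : Rel (ι K G5.e * ι K G5.f - ι K G5.f * ι K G5.e)
      (((vv - vv⁻¹)⁻¹) • (ι K G5.k - ι K G5.k'))
  | ll   : Rel (ι K G5.l * ι K G5.l) (ι K G5.l)
  | kl   : Rel (ι K G5.k * ι K G5.l) (ι K G5.l * ι K G5.k)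
  | lel  : Rel (ι K G5.l * ι K G5.e * ι K G5.l) (ι K G5.l * ι K G5.e)
  | lfl  : Rel (ι K G5.l * ι K G5.f * ι K G5.l) (ι K G5.f * ι K G5.l)
  | serreE : Rel ((vv + vv⁻¹) • (ι K G5.e * ι K G5.l * ι K G5.e))
      (vv⁻¹ • (ι K G5.e * ι K G5.e * ι K G5.l) + vv • (ι K G5.l * (ι K G5.e * ι K G5.e)))
  | serreF : Rel ((vv + vv⁻¹) • (ι K G5.f * ι K G5.l * ι K G5.f))
      (vv⁻¹ • (ι K G5.l * (ι K G5.f * ι K G5.f)) + vv • (ι K G5.f * ι K G5.f * ι K G5.l))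

/-- Mirabolic quantum `sl₂`: the unital `K`-algebra presented by the generators
`e, f, k, k⁻¹, ℓ` and the relations `Rel`. -/
abbrev MU2 : Type := RingQuot Rel

/-- The generator `e` of `MU_v(2)`. -/
def Ee : MU2 := RingQuot.mkAlgHom K Rel (FreeAlgebra.ι K G5.e)
/-- The generator `f` of `MU_v(2)`. -/
def Ff : MU2 := RingQuot.mkAlgHom K Rel (FreeAlgebra.ι K G5.f)
/-- The generator `k` of `MU_v(2)`. -/
def Kk : MU2 := RingQuot.mkAlgHom K Rel (FreeAlgebra.ι K G5.k)
/-- The generator `k⁻¹` of `MU_v(2)`. -/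
def Kk' : MU2 := RingQuot.mkAlgHom K Rel (FreeAlgebra.ι K G5.k')
/-- The generator `ℓ` of `MU_v(2)`. -/
def Ll : MU2 := RingQuot.mkAlgHom K Rel (FreeAlgebra.ι K G5.l)

/-- `k^t` for `t ∈ ℤ` (the `(-t)`-th power of `k⁻¹` when `t < 0`). -/
def kzpow (t : ℤ) : MU2 := if 0 ≤ t then Kk ^ t.toNat else Kk' ^ (-t).toNat

/-- The six families of PBW monomials. -/
def B0 : Set MU2 := {x | ∃ (r s : ℕ) (t : ℤ), x = Ff ^ r * Ee ^ s * kzpow t}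
def B1 : Set MU2 := {x | ∃ (r s : ℕ) (t : ℤ), x = Ll * Ff ^ r * Ee ^ s * kzpow t}
def B2 : Set MU2 :=
  {x | ∃ (r s : ℕ) (t : ℤ), (r, s) ≠ (0, 0) ∧ x = Ff ^ r * Ee ^ s * Ll * kzpow t}
def B3 : Set MU2 :=
  {x | ∃ (r s : ℕ) (t : ℤ), 1 ≤ r ∧ 1 ≤ s ∧ x = Ll * Ff ^ r * Ee ^ s * Ll * kzpow t}
def B4 : Set MU2 :=
  {x | ∃ (r s : ℕ) (t : ℤ), 1 ≤ r ∧ 1 ≤ s ∧ x = Ff ^ r * Ll * Ee ^ s * kzpow t}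
def B5 : Set MU2 :=
  {x | ∃ (r s : ℕ) (t : ℤ), 1 ≤ r ∧ 1 ≤ s ∧ x = Ee ^ s * Ll * Ff ^ r * kzpow t}

/-! ### Auxiliary material for the proof -/

section Aux

lemma vv_ne_zero : vv ≠ 0 := RatFunc.X_ne_zero

lemma hv1 : vv * vv⁻¹ = 1 := mul_inv_cancel₀ vv_ne_zero

lemma vv_pow_ne_one {m : ℕ} (hm : m ≠ 0) : vv ^ m ≠ 1 := by
  intro h
  have hinj := RatFunc.algebraMap_injective ℂ
  have : (Polynomial.X : Polynomial ℂ) ^ m = 1 := by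
    apply hinj
    simpa [map_pow, map_one, RatFunc.algebraMap_X, vv] using h
  have := congrArg Polynomial.natDegree this
  simp [Polynomial.natDegree_X_pow] at this
  exact hm this

lemma vsub_ne_zero : vv - vv⁻¹ ≠ 0 := by
  intro h
  have h2 : vv ^ 2 = 1 := by
    have : vv = vv⁻¹ := sub_eq_zero.mp h
    calc vv ^ 2 = vv * vv := sq vv
    _ = vv * vv⁻¹ := by rw [← this]
    _ = 1 := hv1
  exact vv_pow_ne_one (by norm_num) h2

/-- Quantum integers, defined by the Chebyshev-like recursion. -/
def Qi : ℕ → K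
  | 0 => 0
  | 1 => 1
  | (n+2) => (vv + vv⁻¹) * Qi (n+1) - Qi n

@[simp] lemma Qi_zero : Qi 0 = 0 := rfl
@[simp] lemma Qi_one : Qi 1 = 1 := rfl
lemma Qi_rec (n : ℕ) : Qi (n+2) = (vv + vv⁻¹) * Qi (n+1) - Qi n := rfl

lemma Qi_closed : ∀ n : ℕ, (vv - vv⁻¹) * Qi n = vv ^ n - vv⁻¹ ^ n := by
  intro n
  induction n using Nat.twoStepInduction with
  | zero => simp
  | one => simp
  | more n ih1 ih2 =>
      rw [Qi_rec]
      have : (vv - vv⁻¹) * ((vv + vv⁻¹) * Qi (n+1) - Qi n)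
          = (vv + vv⁻¹) * ((vv - vv⁻¹) * Qi (n+1)) - (vv - vv⁻¹) * Qi n := by ring
      rw [this, ih2, ih1]
      have h1 : vv * vv⁻¹ = 1 := hv1
      linear_combination (vv^n - vv⁻¹^n) * h1

lemma Qi_ne_zero {n : ℕ} (hn : n ≠ 0) : Qi n ≠ 0 := by
  intro h
  have hc := Qi_closed n
  rw [h, mul_zero] at hc
  have hpow : vv ^ n = vv⁻¹ ^ n := sub_eq_zero.mp (Eq.symm hc)
  have : vv ^ (2*n) = 1 := by
    calc vv ^ (2*n) = vv ^ n * vv ^ n := by rw [two_mul, pow_add]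
    _ = vv ^ n * vv⁻¹ ^ n := by rw [← hpow]
    _ = (vv * vv⁻¹) ^ n := (mul_pow _ _ _).symm
    _ = 1 := by rw [hv1, one_pow]
  exact vv_pow_ne_one (by omega) this

end Aux

section Rels

lemma rel_kk' : Kk * Kk' = 1 := by
  have := RingQuot.mkAlgHom_rel K Rel.kk'
  simpa [Kk, Kk', map_mul, map_one] using this

lemma rel_k'k : Kk' * Kk = 1 := by
  have := RingQuot.mkAlgHom_rel K Rel.k'k
  simpa [Kk, Kk', map_mul, map_one] using this

lemma rel_ll : Ll * Ll = Ll := by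
  have := RingQuot.mkAlgHom_rel K Rel.ll
  simpa [Ll, map_mul] using this

lemma rel_kl : Kk * Ll = Ll * Kk := by
  have := RingQuot.mkAlgHom_rel K Rel.kl
  simpa [Kk, Ll, map_mul] using this

lemma rel_lel : Ll * Ee * Ll = Ll * Ee := by
  have := RingQuot.mkAlgHom_rel K Rel.lel
  simpa [Ll, Ee, map_mul] using this

lemma rel_lfl : Ll * Ff * Ll = Ff * Ll := by
  have := RingQuot.mkAlgHom_rel K Rel.lfl
  simpa [Ll, Ff, map_mul] using this

lemma rel_kek' : Kk * Ee * Kk' = (vv ^ 2) • Ee := by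
  have := RingQuot.mkAlgHom_rel K Rel.kek'
  simpa [Kk, Kk', Ee, map_mul, map_smul] using this

lemma zpow_neg_two : vv ^ (-2 : ℤ) = vv⁻¹ ^ 2 := by
  rw [zpow_neg, inv_pow]
  norm_cast

lemma rel_kfk' : Kk * Ff * Kk' = (vv⁻¹ ^ 2) • Ff := by
  have := RingQuot.mkAlgHom_rel K Rel.kfk'
  rw [← zpow_neg_two]
  simpa [Kk, Kk', Ff, map_mul, map_smul] using this

lemma rel_effe : Ee * Ff - Ff * Ee = ((vv - vv⁻¹)⁻¹) • (Kk - Kk') := by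
  have := RingQuot.mkAlgHom_rel K Rel.effe
  simpa [Kk, Kk', Ee, Ff, map_mul, map_smul, map_sub] using this

lemma rel_serreE : (vv + vv⁻¹) • (Ee * Ll * Ee)
    = vv⁻¹ • (Ee * Ee * Ll) + vv • (Ll * (Ee * Ee)) := by
  have := RingQuot.mkAlgHom_rel K Rel.serreE
  simpa [Ee, Ll, map_mul, map_smul, map_add] using this

lemma rel_serreF : (vv + vv⁻¹) • (Ff * Ll * Ff)
    = vv⁻¹ • (Ll * (Ff * Ff)) + vv • (Ff * Ff * Ll) := by
  have := RingQuot.mkAlgHom_rel K Rel.serreF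
  simpa [Ff, Ll, map_mul, map_smul, map_add] using this

/-- `k` as a unit. -/
def Uk : MU2ˣ := ⟨Kk, Kk', rel_kk', rel_k'k⟩

lemma kzpow_eq (t : ℤ) : kzpow t = ((Uk ^ t : MU2ˣ) : MU2) := by
  unfold kzpow
  split
  · next h =>
      rw [← Int.toNat_of_nonneg h, zpow_natCast, Units.val_pow_eq_pow_val]
      rfl
  · next h =>
      have h3 : ((-t).toNat : ℤ) = -t := Int.toNat_of_nonneg (by omega)
      calc Kk' ^ (-t).toNat = ((Uk⁻¹ : MU2ˣ) : MU2) ^ (-t).toNat := rfl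
      _ = ((Uk⁻¹ ^ (-t).toNat : MU2ˣ) : MU2) := by rw [Units.val_pow_eq_pow_val]
      _ = ((Uk ^ t : MU2ˣ) : MU2) := by rw [← zpow_natCast, inv_zpow', h3, neg_neg]

lemma kz_add (a b : ℤ) : kzpow a * kzpow b = kzpow (a+b) := by
  rw [kzpow_eq, kzpow_eq, kzpow_eq, ← Units.val_mul, ← zpow_add]

@[simp] lemma kz_zero : kzpow 0 = 1 := by simp [kzpow]

lemma kz_one : kzpow 1 = Kk := by norm_num [kzpow]

lemma kz_negone : kzpow (-1) = Kk' := by norm_num [kzpow]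

end Rels

section Movers

lemma smul_vv_cancel (y : MU2) : (vv⁻¹^2) • ((vv^2) • y) = y := by
  rw [smul_smul, ← mul_pow, inv_mul_cancel₀ vv_ne_zero]
  simp

lemma smul_vv_cancel' (y : MU2) : (vv^2) • ((vv⁻¹^2) • y) = y := by
  rw [smul_smul, ← mul_pow, mul_inv_cancel₀ vv_ne_zero]
  simp

/-- Commutation of `k` with `e`. -/
lemma ke : Kk * Ee = (vv^2) • (Ee * Kk) := by
  calc Kk * Ee = Kk * Ee * (Kk' * Kk) := by rw [rel_k'k, mul_one]
  _ = Kk * Ee * Kk' * Kk := by rw [← mul_assoc (Kk*Ee) Kk' Kk]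
  _ = ((vv^2) • Ee) * Kk := by rw [rel_kek']
  _ = (vv^2) • (Ee * Kk) := smul_mul_assoc _ _ _

lemma kf : Kk * Ff = (vv⁻¹^2) • (Ff * Kk) := by
  calc Kk * Ff = Kk * Ff * (Kk' * Kk) := by rw [rel_k'k, mul_one]
  _ = Kk * Ff * Kk' * Kk := by rw [← mul_assoc (Kk*Ff) Kk' Kk]
  _ = ((vv⁻¹^2) • Ff) * Kk := by rw [rel_kfk']
  _ = (vv⁻¹^2) • (Ff * Kk) := smul_mul_assoc _ _ _

lemma k'e : Kk' * Ee = (vv⁻¹^2) • (Ee * Kk') := by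
  have h : Ee * Kk = (vv⁻¹^2) • (Kk * Ee) := by
    rw [ke, smul_vv_cancel]
  calc Kk' * Ee = Kk' * (Ee * (Kk * Kk')) := by rw [rel_kk', mul_one]
  _ = Kk' * ((Ee * Kk) * Kk') := by rw [← mul_assoc Ee Kk Kk']
  _ = Kk' * (((vv⁻¹^2) • (Kk * Ee)) * Kk') := by rw [h]
  _ = (vv⁻¹^2) • (Kk' * ((Kk * Ee) * Kk')) := by rw [smul_mul_assoc, mul_smul_comm]
  _ = (vv⁻¹^2) • (((Kk' * Kk) * Ee) * Kk') := by
        rw [← mul_assoc Kk' (Kk*Ee) Kk', ← mul_assoc Kk' Kk Ee]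
  _ = (vv⁻¹^2) • (Ee * Kk') := by rw [rel_k'k, one_mul]

lemma k'f : Kk' * Ff = (vv^2) • (Ff * Kk') := by
  have h : Ff * Kk = (vv^2) • (Kk * Ff) := by
    rw [kf, smul_vv_cancel']
  calc Kk' * Ff = Kk' * (Ff * (Kk * Kk')) := by rw [rel_kk', mul_one]
  _ = Kk' * ((Ff * Kk) * Kk') := by rw [← mul_assoc Ff Kk Kk']
  _ = Kk' * (((vv^2) • (Kk * Ff)) * Kk') := by rw [h]
  _ = (vv^2) • (Kk' * ((Kk * Ff) * Kk')) := by rw [smul_mul_assoc, mul_smul_comm]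
  _ = (vv^2) • (((Kk' * Kk) * Ff) * Kk') := by
        rw [← mul_assoc Kk' (Kk*Ff) Kk', ← mul_assoc Kk' Kk Ff]
  _ = (vv^2) • (Ff * Kk') := by rw [rel_k'k, one_mul]

lemma k'l : Kk' * Ll = Ll * Kk' := by
  calc Kk' * Ll = Kk' * (Ll * (Kk * Kk')) := by rw [rel_kk', mul_one]
  _ = Kk' * ((Ll * Kk) * Kk') := by rw [← mul_assoc Ll Kk Kk']
  _ = Kk' * ((Kk * Ll) * Kk') := by rw [rel_kl]
  _ = ((Kk' * Kk) * Ll) * Kk' := by rw [← mul_assoc Kk' (Kk*Ll) Kk', ← mul_assoc Kk' Kk Ll]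
  _ = Ll * Kk' := by rw [rel_k'k, one_mul]

/-- Context ("mover") forms. -/
lemma mvKE (x : MU2) : Kk * (Ee * x) = (vv^2) • (Ee * (Kk * x)) := by
  rw [← mul_assoc, ke, smul_mul_assoc, mul_assoc]

lemma mvKF (x : MU2) : Kk * (Ff * x) = (vv⁻¹^2) • (Ff * (Kk * x)) := by
  rw [← mul_assoc, kf, smul_mul_assoc, mul_assoc]

lemma mvK'E (x : MU2) : Kk' * (Ee * x) = (vv⁻¹^2) • (Ee * (Kk' * x)) := by
  rw [← mul_assoc, k'e, smul_mul_assoc, mul_assoc]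

lemma mvK'F (x : MU2) : Kk' * (Ff * x) = (vv^2) • (Ff * (Kk' * x)) := by
  rw [← mul_assoc, k'f, smul_mul_assoc, mul_assoc]

lemma mvKL (x : MU2) : Kk * (Ll * x) = Ll * (Kk * x) := by
  rw [← mul_assoc, rel_kl, mul_assoc]

lemma mvK'L (x : MU2) : Kk' * (Ll * x) = Ll * (Kk' * x) := by
  rw [← mul_assoc, k'l, mul_assoc]

lemma mvLL (x : MU2) : Ll * (Ll * x) = Ll * x := by
  rw [← mul_assoc, rel_ll]

lemma mvEF (x : MU2) : Ee * (Ff * x)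
    = Ff * (Ee * x) + ((vv - vv⁻¹)⁻¹) • (Kk * x) - ((vv - vv⁻¹)⁻¹) • (Kk' * x) := by
  have h2 : Ee * Ff = Ff * Ee + (vv - vv⁻¹)⁻¹ • Kk - (vv - vv⁻¹)⁻¹ • Kk' := by
    have h := sub_eq_iff_eq_add.mp rel_effe
    rw [h, smul_sub]
    abel
  calc Ee * (Ff * x) = (Ee * Ff) * x := by rw [mul_assoc]
  _ = (Ff * Ee + ((vv - vv⁻¹)⁻¹) • Kk - ((vv - vv⁻¹)⁻¹) • Kk') * x := by rw [h2]
  _ = _ := by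
      simp only [sub_mul, add_mul, smul_mul_assoc, mul_assoc]

lemma mvSerreE (x : MU2) : (vv + vv⁻¹) • (Ee * (Ll * (Ee * x)))
    = vv⁻¹ • (Ee * (Ee * (Ll * x))) + vv • (Ll * (Ee * (Ee * x))) := by
  have h := congrArg (· * x) rel_serreE
  simpa only [smul_mul_assoc, add_mul, mul_assoc] using h

lemma mvSerreF (x : MU2) : (vv + vv⁻¹) • (Ff * (Ll * (Ff * x)))
    = vv⁻¹ • (Ll * (Ff * (Ff * x))) + vv • (Ff * (Ff * (Ll * x))) := by
  have h := congrArg (· * x) rel_serreF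
  simpa only [smul_mul_assoc, add_mul, mul_assoc] using h

lemma mvLEL (x : MU2) : Ll * (Ee * (Ll * x)) = Ll * (Ee * x) := by
  rw [← mul_assoc, ← mul_assoc, rel_lel, mul_assoc]

lemma mvLFL (x : MU2) : Ll * (Ff * (Ll * x)) = Ff * (Ll * x) := by
  rw [← mul_assoc, ← mul_assoc, rel_lfl, mul_assoc]

/-- Move `g` through `h^n`, picking up `c^n`. -/
lemma move_pow {g h : MU2} {c : K} (H : ∀ x, g * (h * x) = c • (h * (g * x))) :
    ∀ (n : ℕ) (x : MU2), g * (h^n * x) = c^n • (h^n * (g * x)) := by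
  intro n
  induction n with
  | zero => intro x; simp
  | succ n ih =>
      intro x
      calc g * (h^(n+1) * x) = g * (h * (h^n * x)) := by rw [pow_succ', mul_assoc]
      _ = c • (h * (g * (h^n * x))) := H _
      _ = c • (h * (c^n • (h^n * (g * x)))) := by rw [ih x]
      _ = (c * c^n) • (h * (h^n * (g * x))) := by rw [mul_smul_comm, smul_smul]
      _ = c^(n+1) • (h^(n+1) * (g * x)) := by
          rw [show c * c^n = c^(n+1) from (pow_succ' c n).symm]
          congr 1
          rw [← mul_assoc, show h * h^n = h^(n+1) from (pow_succ' h n).symm]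

/-- Move `g^n` through `h`, picking up `c^n`. -/
lemma move_pow_left {g h : MU2} {c : K} (H : ∀ x, g * (h * x) = c • (h * (g * x))) :
    ∀ (n : ℕ) (x : MU2), g^n * (h * x) = c^n • (h * (g^n * x)) := by
  intro n
  induction n with
  | zero => intro x; simp
  | succ n ih =>
      intro x
      calc g^(n+1) * (h * x) = g * (g^n * (h * x)) := by rw [pow_succ', mul_assoc]
      _ = g * (c^n • (h * (g^n * x))) := by rw [ih x]
      _ = c^n • (g * (h * (g^n * x))) := (mul_smul_comm _ _ _)
      _ = c^n • (c • (h * (g * (g^n * x)))) := by rw [H (g^n * x)]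
      _ = (c^n * c) • (h * (g * (g^n * x))) := by rw [smul_smul]
      _ = c^(n+1) • (h * (g^(n+1) * x)) := by
          rw [show c^n * c = c^(n+1) from (pow_succ c n).symm]
          congr 1
          rw [← mul_assoc g (g^n) x, show g * g^n = g^(n+1) from (pow_succ' g n).symm]

end Movers

section Straighten

lemma msub_smul (r s : K) (y : MU2) : (r - s) • y = r • y - s • y := sub_smul r s y
lemma madd_smul (r s : K) (y : MU2) : (r + s) • y = r • y + s • y := add_smul r s y
lemma msmul_smul (r s : K) (y : MU2) : r • s • y = (r * s) • y := smul_smul r s y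
lemma msmul_add (r : K) (y z : MU2) : r • (y + z) = r • y + r • z := smul_add r y z
lemma mneg_smul (r : K) (y : MU2) : (-r) • y = -(r • y) := neg_smul r y
lemma mone_smul (y : MU2) : (1 : K) • y = y := one_smul K y

lemma mul_pow_cons (g : MU2) (n : ℕ) (y : MU2) : g * (g^n * y) = g^(n+1) * y := by
  rw [← mul_assoc, ← pow_succ']

lemma pow_mul_cons (g : MU2) (n : ℕ) (y : MU2) : g^n * (g * y) = g^(n+1) * y := by
  rw [← mul_assoc, ← pow_succ]

/-- `[n+1] f^n ℓ f = v^{-n} ℓ f^{n+1} + v [n] f^{n+1} ℓ` (with right context). -/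
lemma lemF : ∀ (n : ℕ) (x : MU2), Qi (n+1) • (Ff^n * (Ll * (Ff * x)))
    = (vv⁻¹^n) • (Ll * (Ff^(n+1) * x)) + (vv * Qi n) • (Ff^(n+1) * (Ll * x)) := by
  intro n
  induction n with
  | zero => intro x; simp
  | succ n ih =>
      intro x
      have hS : (vv + vv⁻¹) • (Ff^(n+1) * (Ll * (Ff * x)))
          = vv⁻¹ • (Ff^n * (Ll * (Ff * (Ff * x)))) + vv • (Ff^(n+1+1) * (Ll * x)) := by
        simpa only [mul_smul_comm, mul_add, pow_mul_cons] using
          congrArg (Ff^n * ·) (mvSerreF x)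
      have ih' := ih (Ff * x)
      simp only [pow_mul_cons] at ih'
      have ih2 : (Qi (n+1) * vv⁻¹) • (Ff^n * (Ll * (Ff * (Ff * x))))
          = vv⁻¹^(n+1) • (Ll * (Ff^(n+1+1) * x)) + Qi n • (Ff^(n+1) * (Ll * (Ff * x))) := by
        have h2 := congrArg (fun z : MU2 => vv⁻¹ • z) ih'
        simp only [msmul_add, msmul_smul] at h2
        rw [show vv⁻¹ * Qi (n+1) = Qi (n+1) * vv⁻¹ from mul_comm _ _,
          show vv⁻¹ * vv⁻¹^n = vv⁻¹^(n+1) from (pow_succ' vv⁻¹ n).symm,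
          show vv⁻¹ * (vv * Qi n) = Qi n by
            rw [← mul_assoc, inv_mul_cancel₀ vv_ne_zero, one_mul]] at h2
        exact h2
      calc Qi (n+1+1) • (Ff^(n+1) * (Ll * (Ff * x)))
          = ((vv + vv⁻¹) * Qi (n+1)) • (Ff^(n+1) * (Ll * (Ff * x)))
            - Qi n • (Ff^(n+1) * (Ll * (Ff * x))) := by
            rw [show Qi (n+1+1) = (vv + vv⁻¹) * Qi (n+1) - Qi n from rfl, msub_smul]
        _ = Qi (n+1) • ((vv + vv⁻¹) • (Ff^(n+1) * (Ll * (Ff * x))))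
            - Qi n • (Ff^(n+1) * (Ll * (Ff * x))) := by
            rw [msmul_smul, mul_comm (Qi (n+1))]
        _ = Qi (n+1) • (vv⁻¹ • (Ff^n * (Ll * (Ff * (Ff * x)))) + vv • (Ff^(n+1+1) * (Ll * x)))
            - Qi n • (Ff^(n+1) * (Ll * (Ff * x))) := by rw [hS]
        _ = (Qi (n+1) * vv⁻¹) • (Ff^n * (Ll * (Ff * (Ff * x))))
            + (vv * Qi (n+1)) • (Ff^(n+1+1) * (Ll * x))
            - Qi n • (Ff^(n+1) * (Ll * (Ff * x))) := by
            simp only [msmul_add, msmul_smul]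
            rw [mul_comm (Qi (n+1)) vv]
        _ = (vv⁻¹^(n+1) • (Ll * (Ff^(n+1+1) * x)) + Qi n • (Ff^(n+1) * (Ll * (Ff * x))))
            + (vv * Qi (n+1)) • (Ff^(n+1+1) * (Ll * x))
            - Qi n • (Ff^(n+1) * (Ll * (Ff * x))) := by rw [ih2]
        _ = vv⁻¹^(n+1) • (Ll * (Ff^(n+1+1) * x))
            + (vv * Qi (n+1)) • (Ff^(n+1+1) * (Ll * x)) := by abel

/-- `[n+1] e^n ℓ e = v^{-1}[n] e^{n+1} ℓ + v^n ℓ e^{n+1}` (with right context). -/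
lemma lemE : ∀ (n : ℕ) (x : MU2), Qi (n+1) • (Ee^n * (Ll * (Ee * x)))
    = (vv⁻¹ * Qi n) • (Ee^(n+1) * (Ll * x)) + (vv^n) • (Ll * (Ee^(n+1) * x)) := by
  intro n
  induction n with
  | zero => intro x; simp
  | succ n ih =>
      intro x
      have hS : (vv + vv⁻¹) • (Ee^(n+1) * (Ll * (Ee * x)))
          = vv⁻¹ • (Ee^(n+1+1) * (Ll * x)) + vv • (Ee^n * (Ll * (Ee * (Ee * x)))) := by
        simpa only [mul_smul_comm, mul_add, pow_mul_cons] using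
          congrArg (Ee^n * ·) (mvSerreE x)
      have ih' := ih (Ee * x)
      simp only [pow_mul_cons] at ih'
      have ih2 : (Qi (n+1) * vv) • (Ee^n * (Ll * (Ee * (Ee * x))))
          = Qi n • (Ee^(n+1) * (Ll * (Ee * x))) + vv^(n+1) • (Ll * (Ee^(n+1+1) * x)) := by
        have h2 := congrArg (fun z : MU2 => vv • z) ih'
        simp only [msmul_add, msmul_smul] at h2
        rw [show vv * Qi (n+1) = Qi (n+1) * vv from mul_comm _ _,
          show vv * vv^n = vv^(n+1) from (pow_succ' vv n).symm,
          show vv * (vv⁻¹ * Qi n) = Qi n by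
            rw [← mul_assoc, mul_inv_cancel₀ vv_ne_zero, one_mul]] at h2
        exact h2
      calc Qi (n+1+1) • (Ee^(n+1) * (Ll * (Ee * x)))
          = ((vv + vv⁻¹) * Qi (n+1)) • (Ee^(n+1) * (Ll * (Ee * x)))
            - Qi n • (Ee^(n+1) * (Ll * (Ee * x))) := by
            rw [show Qi (n+1+1) = (vv + vv⁻¹) * Qi (n+1) - Qi n from rfl, msub_smul]
        _ = Qi (n+1) • ((vv + vv⁻¹) • (Ee^(n+1) * (Ll * (Ee * x))))
            - Qi n • (Ee^(n+1) * (Ll * (Ee * x))) := by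
            rw [msmul_smul, mul_comm (Qi (n+1))]
        _ = Qi (n+1) • (vv⁻¹ • (Ee^(n+1+1) * (Ll * x)) + vv • (Ee^n * (Ll * (Ee * (Ee * x)))))
            - Qi n • (Ee^(n+1) * (Ll * (Ee * x))) := by rw [hS]
        _ = (vv⁻¹ * Qi (n+1)) • (Ee^(n+1+1) * (Ll * x))
            + (Qi (n+1) * vv) • (Ee^n * (Ll * (Ee * (Ee * x))))
            - Qi n • (Ee^(n+1) * (Ll * (Ee * x))) := by
            simp only [msmul_add, msmul_smul]
            rw [mul_comm (Qi (n+1)) vv⁻¹]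
        _ = (vv⁻¹ * Qi (n+1)) • (Ee^(n+1+1) * (Ll * x))
            + (Qi n • (Ee^(n+1) * (Ll * (Ee * x))) + vv^(n+1) • (Ll * (Ee^(n+1+1) * x)))
            - Qi n • (Ee^(n+1) * (Ll * (Ee * x))) := by rw [ih2]
        _ = (vv⁻¹ * Qi (n+1)) • (Ee^(n+1+1) * (Ll * x))
            + vv^(n+1) • (Ll * (Ee^(n+1+1) * x)) := by abel

lemma Qi_sub (m : ℕ) : Qi (m+1) - vv * Qi m = vv⁻¹^m := by
  apply mul_left_cancel₀ vsub_ne_zero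
  rw [mul_sub, show (vv - vv⁻¹) * (vv * Qi m) = vv * ((vv - vv⁻¹) * Qi m) by ring,
    Qi_closed, Qi_closed]
  ring

lemma Qi_sub' (m : ℕ) : Qi (m+1) - vv^m = vv⁻¹ * Qi m := by
  apply mul_left_cancel₀ vsub_ne_zero
  rw [mul_sub, show (vv - vv⁻¹) * (vv⁻¹ * Qi m) = vv⁻¹ * ((vv - vv⁻¹) * Qi m) by ring,
    Qi_closed, Qi_closed]
  ring

/-- `ℓ f^n ℓ = f^n ℓ` (with right context). -/
lemma lemLFL : ∀ (n : ℕ) (x : MU2), Ll * (Ff^n * (Ll * x)) = Ff^n * (Ll * x) := by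
  intro n x
  cases n with
  | zero => simp [mvLL]
  | succ m =>
      have h := lemF m (Ll * x)
      rw [mvLFL, pow_mul_cons, mvLL] at h
      have h3 : vv⁻¹^m • (Ll * (Ff^(m+1) * (Ll * x)))
          = Qi (m+1) • (Ff^(m+1) * (Ll * x)) - (vv * Qi m) • (Ff^(m+1) * (Ll * x)) := by
        rw [h]; abel
      rw [← msub_smul, Qi_sub] at h3
      exact smul_right_injective MU2 (pow_ne_zero m (inv_ne_zero vv_ne_zero)) h3

/-- `ℓ e^n ℓ = ℓ e^n` (with right context). -/
lemma lemLEL : ∀ (n : ℕ) (x : MU2), Ll * (Ee^n * (Ll * x)) = Ll * (Ee^n * x) := by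
  intro n
  induction n using Nat.twoStepInduction with
  | zero => intro x; simp [mvLL]
  | one => intro x; simpa using mvLEL x
  | more m ih1 ih2 =>
      intro x
      show Ll * (Ee^(m+1+1) * (Ll * x)) = Ll * (Ee^(m+1+1) * x)
      have h := congrArg (Ll * ·) (lemE (m+1) x)
      simp only [mul_smul_comm, mul_add] at h
      rw [show Ll * (Ee^(m+1) * (Ll * (Ee * x))) = Ll * (Ee^(m+1) * (Ee * x)) from
        ih2 (Ee * x), pow_mul_cons, mvLL] at h
      have h3 : (vv⁻¹ * Qi (m+1)) • (Ll * (Ee^(m+1+1) * (Ll * x)))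
          = Qi (m+1+1) • (Ll * (Ee^(m+1+1) * x)) - (vv^(m+1)) • (Ll * (Ee^(m+1+1) * x)) := by
        rw [h]; abel
      rw [← msub_smul, Qi_sub'] at h3
      have hne : vv⁻¹ * Qi (m+1) ≠ 0 :=
        mul_ne_zero (inv_ne_zero vv_ne_zero) (Qi_ne_zero (by omega))
      exact smul_right_injective MU2 hne h3

lemma mvFE (x : MU2) : Ff * (Ee * x)
    = Ee * (Ff * x) - ((vv - vv⁻¹)⁻¹) • (Kk * x) + ((vv - vv⁻¹)⁻¹) • (Kk' * x) := by
  rw [mvEF x]; abel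

/-- Straightening `e^{s+1} f` (with right context). -/
lemma cEF (s : ℕ) : ∃ a b : K, ∀ x : MU2, Ee^(s+1) * (Ff * x)
    = Ff * (Ee^(s+1) * x) + a • (Ee^s * (Kk * x)) + b • (Ee^s * (Kk' * x)) := by
  induction s with
  | zero =>
      refine ⟨(vv - vv⁻¹)⁻¹, -(vv - vv⁻¹)⁻¹, fun x => ?_⟩
      simp only [zero_add, pow_one, pow_zero, one_mul, mneg_smul]
      rw [mvEF x]
      abel
  | succ s ih =>
      obtain ⟨a, b, hab⟩ := ih
      refine ⟨(vv - vv⁻¹)⁻¹ * (vv^2)^(s+1) + a, b - (vv - vv⁻¹)⁻¹ * (vv⁻¹^2)^(s+1),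
        fun x => ?_⟩
      rw [show Ee^(s+1+1) = Ee * Ee^(s+1) from pow_succ' Ee (s+1),
        mul_assoc Ee (Ee^(s+1)) (Ff * x), mul_assoc Ee (Ee^(s+1)) x, hab x]
      simp only [mul_add, mul_smul_comm]
      rw [mvEF (Ee^(s+1) * x), move_pow mvKE (s+1) x, move_pow mvK'E (s+1) x]
      simp only [mul_pow_cons, msmul_smul, madd_smul, msub_smul]
      ring_nf
      abel

/-- Straightening `f^{r+1} e` (with right context). -/
lemma cFE (r : ℕ) : ∃ a b : K, ∀ x : MU2, Ff^(r+1) * (Ee * x)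
    = Ee * (Ff^(r+1) * x) + a • (Ff^r * (Kk * x)) + b • (Ff^r * (Kk' * x)) := by
  induction r with
  | zero =>
      refine ⟨-(vv - vv⁻¹)⁻¹, (vv - vv⁻¹)⁻¹, fun x => ?_⟩
      simp only [zero_add, pow_one, pow_zero, one_mul, mneg_smul]
      rw [mvFE x]
      abel
  | succ r ih =>
      obtain ⟨a, b, hab⟩ := ih
      refine ⟨a - (vv - vv⁻¹)⁻¹ * (vv⁻¹^2)^(r+1), b + (vv - vv⁻¹)⁻¹ * (vv^2)^(r+1),
        fun x => ?_⟩
      rw [show Ff^(r+1+1) = Ff * Ff^(r+1) from pow_succ' Ff (r+1),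
        mul_assoc Ff (Ff^(r+1)) (Ee * x), mul_assoc Ff (Ff^(r+1)) x, hab x]
      simp only [mul_add, mul_smul_comm]
      rw [mvFE (Ff^(r+1) * x), move_pow mvKF (r+1) x, move_pow mvK'F (r+1) x]
      simp only [mul_pow_cons, msmul_smul, madd_smul, msub_smul]
      ring_nf
      abel

end Straighten

section KZ

lemma Kk_kz (t : ℤ) : Kk * kzpow t = kzpow (1+t) := by
  rw [← kz_one, kz_add]

lemma K'_kz (t : ℤ) : Kk' * kzpow t = kzpow (-1+t) := by
  rw [← kz_negone, kz_add]

lemma kz_K (t : ℤ) : kzpow t * Kk = kzpow (t+1) := by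
  rw [← kz_one, kz_add]

lemma kz_K' (t : ℤ) : kzpow t * Kk' = kzpow (t+(-1)) := by
  rw [← kz_negone, kz_add]

lemma kzL (t : ℤ) (x : MU2) : kzpow t * (Ll * x) = Ll * (kzpow t * x) := by
  by_cases h : 0 ≤ t
  · simp only [kzpow, if_pos h]
    simpa using move_pow_left (c := (1:K)) (fun y => by rw [mvKL, mone_smul]) t.toNat x
  · simp only [kzpow, if_neg h]
    simpa using move_pow_left (c := (1:K)) (fun y => by rw [mvK'L, mone_smul]) (-t).toNat x

lemma kz_L (t : ℤ) : kzpow t * Ll = Ll * kzpow t := by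
  simpa using kzL t 1

lemma kzE' (t : ℤ) : ∃ c : K, kzpow t * Ee = c • (Ee * kzpow t) := by
  by_cases h : 0 ≤ t
  · refine ⟨(vv^2)^t.toNat, ?_⟩
    simp only [kzpow, if_pos h]
    simpa using move_pow_left mvKE t.toNat 1
  · refine ⟨(vv⁻¹^2)^(-t).toNat, ?_⟩
    simp only [kzpow, if_neg h]
    simpa using move_pow_left mvK'E (-t).toNat 1

lemma kzF' (t : ℤ) : ∃ c : K, kzpow t * Ff = c • (Ff * kzpow t) := by
  by_cases h : 0 ≤ t
  · refine ⟨(vv⁻¹^2)^t.toNat, ?_⟩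
    simp only [kzpow, if_pos h]
    simpa using move_pow_left mvKF t.toNat 1
  · refine ⟨(vv^2)^(-t).toNat, ?_⟩
    simp only [kzpow, if_neg h]
    simpa using move_pow_left mvK'F (-t).toNat 1

/-- Moving `k` through a PBW word `f^a e^b k^u`. -/
lemma k_wordP (a b : ℕ) (u : ℤ) : ∃ c : K,
    Kk * (Ff^a * (Ee^b * kzpow u)) = c • (Ff^a * (Ee^b * kzpow (1+u))) := by
  refine ⟨(vv⁻¹^2)^a * (vv^2)^b, ?_⟩
  rw [move_pow mvKF a, move_pow mvKE b, Kk_kz, mul_smul_comm, msmul_smul]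

lemma k'_wordP (a b : ℕ) (u : ℤ) : ∃ c : K,
    Kk' * (Ff^a * (Ee^b * kzpow u)) = c • (Ff^a * (Ee^b * kzpow (-1+u))) := by
  refine ⟨(vv^2)^a * (vv⁻¹^2)^b, ?_⟩
  rw [move_pow mvK'F a, move_pow mvK'E b, K'_kz, mul_smul_comm, msmul_smul]

/-- Moving `k` through a PBW word `e^a f^b k^u`. -/
lemma k_wordP' (a b : ℕ) (u : ℤ) : ∃ c : K,
    Kk * (Ee^a * (Ff^b * kzpow u)) = c • (Ee^a * (Ff^b * kzpow (1+u))) := by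
  refine ⟨(vv^2)^a * (vv⁻¹^2)^b, ?_⟩
  rw [move_pow mvKE a, move_pow mvKF b, Kk_kz, mul_smul_comm, msmul_smul]

lemma k'_wordP' (a b : ℕ) (u : ℤ) : ∃ c : K,
    Kk' * (Ee^a * (Ff^b * kzpow u)) = c • (Ee^a * (Ff^b * kzpow (-1+u))) := by
  refine ⟨(vv⁻¹^2)^a * (vv^2)^b, ?_⟩
  rw [move_pow mvK'E a, move_pow mvK'F b, K'_kz, mul_smul_comm, msmul_smul]

end KZ

section SpanHelpers

/-- Closure of span membership under two-sided multiplication by fixed elements. -/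
lemma mulmul {T : Submodule K MU2} {P : Set MU2} (A B : MU2)
    (h : ∀ m ∈ P, A * (m * B) ∈ T) :
    ∀ y ∈ Submodule.span K P, A * (y * B) ∈ T := by
  intro y hy
  induction hy using Submodule.span_induction with
  | mem z hz => exact h z hz
  | zero => simpa using T.zero_mem
  | add y z hy hz ihy ihz => simpa [add_mul, mul_add] using T.add_mem ihy ihz
  | smul c y hy ihy => simpa [smul_mul_assoc, mul_smul_comm] using T.smul_mem c ihy

lemma spanclosedL {T : Submodule K MU2} {P : Set MU2} (A : MU2)
    (h : ∀ m ∈ P, A * m ∈ T) : ∀ y ∈ Submodule.span K P, A * y ∈ T := by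
  intro y hy
  have := mulmul A 1 (T := T) (P := P) (fun m hm => by simpa using h m hm) y hy
  simpa using this

lemma spanclosedR {T : Submodule K MU2} {P : Set MU2} (B : MU2)
    (h : ∀ m ∈ P, m * B ∈ T) : ∀ y ∈ Submodule.span K P, y * B ∈ T := by
  intro y hy
  have := mulmul 1 B (T := T) (P := P) (fun m hm => by simpa using h m hm) y hy
  simpa using this

/-- The set of ordered monomials `f^a e^b k^u`. -/
def Pset : Set MU2 := {x | ∃ (a b : ℕ) (u : ℤ), x = Ff^a * (Ee^b * kzpow u)}

/-- The set of anti-ordered monomials `e^a f^b k^u`. -/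
def Pset' : Set MU2 := {x | ∃ (a b : ℕ) (u : ℤ), x = Ee^a * (Ff^b * kzpow u)}

def SP : Submodule K MU2 := Submodule.span K Pset
def SP' : Submodule K MU2 := Submodule.span K Pset'

lemma memP (a b : ℕ) (u : ℤ) : Ff^a * (Ee^b * kzpow u) ∈ SP :=
  Submodule.subset_span ⟨a, b, u, rfl⟩

lemma memP' (a b : ℕ) (u : ℤ) : Ee^a * (Ff^b * kzpow u) ∈ SP' :=
  Submodule.subset_span ⟨a, b, u, rfl⟩

lemma f_SP : ∀ y ∈ SP, Ff * y ∈ SP := by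
  refine spanclosedL Ff ?_
  rintro m ⟨a, b, u, rfl⟩
  rw [mul_pow_cons]
  exact memP (a+1) b u

lemma e_SP' : ∀ y ∈ SP', Ee * y ∈ SP' := by
  refine spanclosedL Ee ?_
  rintro m ⟨a, b, u, rfl⟩
  rw [mul_pow_cons]
  exact memP' (a+1) b u

lemma e_P : ∀ (a b : ℕ) (u : ℤ), Ee * (Ff^a * (Ee^b * kzpow u)) ∈ SP := by
  intro a
  induction a with
  | zero =>
      intro b u
      simp only [pow_zero, one_mul, mul_pow_cons]
      simpa using memP 0 (b+1) u
  | succ a ih =>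
      intro b u
      rw [show Ff^(a+1) = Ff * Ff^a from pow_succ' Ff a, mul_assoc, mvEF]
      obtain ⟨c1, hc1⟩ := k_wordP a b u
      obtain ⟨c2, hc2⟩ := k'_wordP a b u
      rw [hc1, hc2]
      refine SP.sub_mem (SP.add_mem (f_SP _ (ih b u)) ?_) ?_
      · exact SP.smul_mem _ (SP.smul_mem _ (memP a b (1+u)))
      · exact SP.smul_mem _ (SP.smul_mem _ (memP a b (-1+u)))

lemma e_SP : ∀ y ∈ SP, Ee * y ∈ SP := by
  refine spanclosedL Ee ?_
  rintro m ⟨a, b, u, rfl⟩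
  exact e_P a b u

lemma f_P' : ∀ (a b : ℕ) (u : ℤ), Ff * (Ee^a * (Ff^b * kzpow u)) ∈ SP' := by
  intro a
  induction a with
  | zero =>
      intro b u
      simp only [pow_zero, one_mul, mul_pow_cons]
      simpa using memP' 0 (b+1) u
  | succ a ih =>
      intro b u
      rw [show Ee^(a+1) = Ee * Ee^a from pow_succ' Ee a, mul_assoc, mvFE]
      obtain ⟨c1, hc1⟩ := k_wordP' a b u
      obtain ⟨c2, hc2⟩ := k'_wordP' a b u
      rw [hc1, hc2]
      refine SP'.add_mem (SP'.sub_mem (e_SP' _ (ih b u)) ?_) ?_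
      · exact SP'.smul_mem _ (SP'.smul_mem _ (memP' a b (1+u)))
      · exact SP'.smul_mem _ (SP'.smul_mem _ (memP' a b (-1+u)))

lemma f_SP' : ∀ y ∈ SP', Ff * y ∈ SP' := by
  refine spanclosedL Ff ?_
  rintro m ⟨a, b, u, rfl⟩
  exact f_P' a b u

/-- Straightening: `e^s f^r` lies in the span of ordered monomials. -/
lemma straightEF (s r : ℕ) : Ee^s * Ff^r ∈ SP := by
  induction s with
  | zero =>
      simp only [pow_zero, one_mul]
      simpa using memP r 0 0
  | succ s ih =>
      rw [show Ee^(s+1) = Ee * Ee^s from pow_succ' Ee s, mul_assoc]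
      exact e_SP _ ih

/-- Straightening: `f^r e^s` lies in the span of anti-ordered monomials. -/
lemma straightFE (r s : ℕ) : Ff^r * Ee^s ∈ SP' := by
  induction r with
  | zero =>
      simp only [pow_zero, one_mul]
      simpa using memP' s 0 0
  | succ r ih =>
      rw [show Ff^(r+1) = Ff * Ff^r from pow_succ' Ff r, mul_assoc]
      exact f_SP' _ ih

end SpanHelpers

section BSpan

/-- The span of all six families. -/
def SS : Submodule K MU2 := Submodule.span K (B0 ∪ B1 ∪ B2 ∪ B3 ∪ B4 ∪ B5)

lemma memB0 (r s : ℕ) (t : ℤ) : Ff^r * (Ee^s * kzpow t) ∈ SS :=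
  Submodule.subset_span (Or.inl (Or.inl (Or.inl (Or.inl
    (Or.inl ⟨r, s, t, (mul_assoc _ _ _).symm⟩)))))

lemma memB1 (r s : ℕ) (t : ℤ) : Ll * (Ff^r * (Ee^s * kzpow t)) ∈ SS :=
  Submodule.subset_span (Or.inl (Or.inl (Or.inl (Or.inl
    (Or.inr ⟨r, s, t, by simp only [mul_assoc]⟩)))))

lemma memB2 (r s : ℕ) (t : ℤ) (h : (r, s) ≠ (0, 0)) :
    Ff^r * (Ee^s * (Ll * kzpow t)) ∈ SS :=
  Submodule.subset_span (Or.inl (Or.inl (Or.inl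
    (Or.inr ⟨r, s, t, h, by simp only [mul_assoc]⟩))))

lemma memB3 (r s : ℕ) (t : ℤ) (hr : 1 ≤ r) (hs : 1 ≤ s) :
    Ll * (Ff^r * (Ee^s * (Ll * kzpow t))) ∈ SS :=
  Submodule.subset_span (Or.inl (Or.inl
    (Or.inr ⟨r, s, t, hr, hs, by simp only [mul_assoc]⟩)))

lemma memB4 (r s : ℕ) (t : ℤ) (hr : 1 ≤ r) (hs : 1 ≤ s) :
    Ff^r * (Ll * (Ee^s * kzpow t)) ∈ SS :=
  Submodule.subset_span (Or.inl
    (Or.inr ⟨r, s, t, hr, hs, by simp only [mul_assoc]⟩))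

lemma memB5 (r s : ℕ) (t : ℤ) (hr : 1 ≤ r) (hs : 1 ≤ s) :
    Ee^s * (Ll * (Ff^r * kzpow t)) ∈ SS :=
  Submodule.subset_span
    (Or.inr ⟨r, s, t, hr, hs, by simp only [mul_assoc]⟩)

lemma pair_ne {r s : ℕ} (hs : 1 ≤ s) : (r, s) ≠ (0, 0) := by
  simp only [ne_eq, Prod.mk.injEq, not_and]
  omega

lemma pair_ne' {r s : ℕ} (hr : 1 ≤ r) : (r, s) ≠ (0, 0) := by
  simp only [ne_eq, Prod.mk.injEq, not_and]
  omega

/-- `ℓ (e^s f^r) k^t ∈ SS`. -/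
lemma mem_lefk (s r : ℕ) (t : ℤ) : Ll * (Ee^s * (Ff^r * kzpow t)) ∈ SS := by
  have h : ∀ m ∈ Pset, Ll * (m * kzpow t) ∈ SS := by
    rintro m ⟨a, b, u, rfl⟩
    simp only [mul_assoc, kz_add]
    exact memB1 a b (u+t)
  simpa only [mul_assoc] using mulmul Ll (kzpow t) h _ (straightEF s r)

/-- `(e^s f^r) ℓ k^t ∈ SS`. -/
lemma mem_efl (s r : ℕ) (t : ℤ) : Ee^s * (Ff^r * (Ll * kzpow t)) ∈ SS := by
  have h : ∀ m ∈ Pset, m * (Ll * kzpow t) ∈ SS := by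
    rintro m ⟨a, b, u, rfl⟩
    simp only [mul_assoc]
    rw [kzL u (kzpow t), kz_add]
    by_cases h0 : a = 0 ∧ b = 0
    · obtain ⟨rfl, rfl⟩ := h0
      simpa using memB1 0 0 (u+t)
    · refine memB2 a b (u+t) ?_
      simp only [ne_eq, Prod.mk.injEq, not_and]
      intro ha hb
      exact h0 ⟨ha, hb⟩
  simpa only [mul_assoc] using spanclosedR (Ll * kzpow t) h _ (straightEF s r)

/-- `(e^a f^b) k^u ∈ SS`. -/
lemma mem_efk (a b : ℕ) (u : ℤ) : Ee^a * (Ff^b * kzpow u) ∈ SS := by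
  have h : ∀ m ∈ Pset, m * kzpow u ∈ SS := by
    rintro m ⟨c, d, w, rfl⟩
    simp only [mul_assoc, kz_add]
    exact memB0 c d (w+u)
  simpa only [mul_assoc] using spanclosedR (kzpow u) h _ (straightEF a b)

lemma SP_le_SS : SP ≤ SS := by
  rw [SP]
  apply Submodule.span_le.mpr
  rintro m ⟨a, b, u, rfl⟩
  exact memB0 a b u

lemma L_SP_mem : ∀ y ∈ SP, Ll * y ∈ SS := by
  refine spanclosedL Ll ?_
  rintro m ⟨a, b, u, rfl⟩
  exact memB1 a b u

lemma EsLE_expand (s : ℕ) (x : MU2) : Ee^s * (Ll * (Ee * x))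
    = (Qi (s+1))⁻¹ • ((vv⁻¹ * Qi s) • (Ee^(s+1) * (Ll * x)) + vv^s • (Ll * (Ee^(s+1) * x))) := by
  rw [← lemE s x, msmul_smul, inv_mul_cancel₀ (Qi_ne_zero (by omega)), mone_smul]

lemma FsLF_expand (r : ℕ) (x : MU2) : Ff^r * (Ll * (Ff * x))
    = (Qi (r+1))⁻¹ • (vv⁻¹^r • (Ll * (Ff^(r+1) * x)) + (vv * Qi r) • (Ff^(r+1) * (Ll * x))) := by
  rw [← lemF r x, msmul_smul, inv_mul_cancel₀ (Qi_ne_zero (by omega)), mone_smul]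

/-- `e^a f^b ℓ f k^w ∈ SS`. -/
lemma ELFF (a b : ℕ) (w : ℤ) : Ee^a * (Ff^b * (Ll * (Ff * kzpow w))) ∈ SS := by
  rw [FsLF_expand b (kzpow w)]
  simp only [msmul_add, mul_add, mul_smul_comm, msmul_smul]
  refine SS.add_mem (SS.smul_mem _ ?_) (SS.smul_mem _ ?_)
  · -- Ee^a * (Ll * (Ff^(b+1) * kzpow w))
    rcases Nat.eq_zero_or_pos a with ha | ha
    · subst ha
      simpa using memB1 (b+1) 0 w
    · exact memB5 (b+1) a w (by omega) ha
  · -- Ee^a * (Ff^(b+1) * (Ll * kzpow w))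
    exact mem_efl a (b+1) w

/-- `f^r e^s ℓ f k^t ∈ SS` (the hard straightening). -/
lemma B2f (r s : ℕ) (t : ℤ) : Ff^r * (Ee^s * (Ll * (Ff * kzpow t))) ∈ SS := by
  have h : ∀ m ∈ Pset', m * (Ll * (Ff * kzpow t)) ∈ SS := by
    rintro m ⟨a, b, u, rfl⟩
    simp only [mul_assoc]
    rw [kzL u (Ff * kzpow t), ← mul_assoc (kzpow u) Ff (kzpow t)]
    obtain ⟨c, hc⟩ := kzF' u
    rw [hc, smul_mul_assoc, mul_assoc Ff (kzpow u) (kzpow t), kz_add]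
    simp only [mul_smul_comm]
    exact SS.smul_mem c (ELFF a b (u+t))
  simpa only [mul_assoc] using spanclosedR (Ll * (Ff * kzpow t)) h _ (straightFE r s)

end BSpan

section Closure

lemma mem_LfeL (r s : ℕ) (t : ℤ) : Ll * (Ff^r * (Ee^s * (Ll * kzpow t))) ∈ SS := by
  rcases Nat.eq_zero_or_pos s with hs | hs
  · subst hs
    simp only [pow_zero, one_mul]
    rw [lemLFL r (kzpow t)]
    rcases Nat.eq_zero_or_pos r with hr | hr
    · subst hr
      simpa using memB1 0 0 t
    · simpa using memB2 r 0 t (pair_ne' hr)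
  · rcases Nat.eq_zero_or_pos r with hr | hr
    · subst hr
      simp only [pow_zero, one_mul]
      rw [lemLEL s (kzpow t)]
      simpa using memB1 0 s t
    · exact memB3 r s t hr hs

lemma closure_lB : ∀ m ∈ B0 ∪ B1 ∪ B2 ∪ B3 ∪ B4 ∪ B5, Ll * m ∈ SS := by
  intro m hm
  rcases hm with ((((h | h) | h) | h) | h) | h
  · obtain ⟨r, s, t, rfl⟩ := h
    simp only [mul_assoc]
    exact memB1 r s t
  · obtain ⟨r, s, t, rfl⟩ := h
    simp only [mul_assoc]
    rw [mvLL]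
    exact memB1 r s t
  · obtain ⟨r, s, t, h2, rfl⟩ := h
    simp only [mul_assoc]
    exact mem_LfeL r s t
  · obtain ⟨r, s, t, hr, hs, rfl⟩ := h
    simp only [mul_assoc]
    rw [mvLL]
    exact memB3 r s t hr hs
  · obtain ⟨r, s, t, hr, hs, rfl⟩ := h
    simp only [mul_assoc]
    rw [lemLFL r (Ee^s * kzpow t)]
    exact memB4 r s t hr hs
  · obtain ⟨r, s, t, hr, hs, rfl⟩ := h
    simp only [mul_assoc]
    rw [lemLEL s (Ff^r * kzpow t)]
    exact mem_lefk s r t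

lemma lmul_SS : ∀ y ∈ SS, Ll * y ∈ SS := spanclosedL Ll closure_lB

lemma closure_K : ∀ m ∈ B0 ∪ B1 ∪ B2 ∪ B3 ∪ B4 ∪ B5, m * Kk ∈ SS := by
  intro m hm
  rcases hm with ((((h | h) | h) | h) | h) | h
  · obtain ⟨r, s, t, rfl⟩ := h
    simp only [mul_assoc, kz_K]
    exact memB0 r s (t+1)
  · obtain ⟨r, s, t, rfl⟩ := h
    simp only [mul_assoc, kz_K]
    exact memB1 r s (t+1)
  · obtain ⟨r, s, t, h2, rfl⟩ := h
    simp only [mul_assoc, kz_K]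
    exact memB2 r s (t+1) h2
  · obtain ⟨r, s, t, hr, hs, rfl⟩ := h
    simp only [mul_assoc, kz_K]
    exact memB3 r s (t+1) hr hs
  · obtain ⟨r, s, t, hr, hs, rfl⟩ := h
    simp only [mul_assoc, kz_K]
    exact memB4 r s (t+1) hr hs
  · obtain ⟨r, s, t, hr, hs, rfl⟩ := h
    simp only [mul_assoc, kz_K]
    exact memB5 r s (t+1) hr hs

lemma closure_K' : ∀ m ∈ B0 ∪ B1 ∪ B2 ∪ B3 ∪ B4 ∪ B5, m * Kk' ∈ SS := by
  intro m hm
  rcases hm with ((((h | h) | h) | h) | h) | h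
  · obtain ⟨r, s, t, rfl⟩ := h
    simp only [mul_assoc, kz_K']
    exact memB0 r s (t+(-1))
  · obtain ⟨r, s, t, rfl⟩ := h
    simp only [mul_assoc, kz_K']
    exact memB1 r s (t+(-1))
  · obtain ⟨r, s, t, h2, rfl⟩ := h
    simp only [mul_assoc, kz_K']
    exact memB2 r s (t+(-1)) h2
  · obtain ⟨r, s, t, hr, hs, rfl⟩ := h
    simp only [mul_assoc, kz_K']
    exact memB3 r s (t+(-1)) hr hs
  · obtain ⟨r, s, t, hr, hs, rfl⟩ := h
    simp only [mul_assoc, kz_K']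
    exact memB4 r s (t+(-1)) hr hs
  · obtain ⟨r, s, t, hr, hs, rfl⟩ := h
    simp only [mul_assoc, kz_K']
    exact memB5 r s (t+(-1)) hr hs

lemma closure_L : ∀ m ∈ B0 ∪ B1 ∪ B2 ∪ B3 ∪ B4 ∪ B5, m * Ll ∈ SS := by
  intro m hm
  rcases hm with ((((h | h) | h) | h) | h) | h
  · obtain ⟨r, s, t, rfl⟩ := h
    simp only [mul_assoc, kz_L]
    by_cases h0 : r = 0 ∧ s = 0
    · obtain ⟨rfl, rfl⟩ := h0
      simpa using memB1 0 0 t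
    · refine memB2 r s t ?_
      simp only [ne_eq, Prod.mk.injEq, not_and]
      intro ha hb
      exact h0 ⟨ha, hb⟩
  · obtain ⟨r, s, t, rfl⟩ := h
    simp only [mul_assoc, kz_L]
    exact mem_LfeL r s t
  · obtain ⟨r, s, t, h2, rfl⟩ := h
    simp only [mul_assoc, kz_L, mvLL]
    exact memB2 r s t h2
  · obtain ⟨r, s, t, hr, hs, rfl⟩ := h
    simp only [mul_assoc, kz_L, mvLL]
    exact memB3 r s t hr hs
  · obtain ⟨r, s, t, hr, hs, rfl⟩ := h
    simp only [mul_assoc, kz_L]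
    rw [lemLEL s (kzpow t)]
    exact memB4 r s t hr hs
  · obtain ⟨r, s, t, hr, hs, rfl⟩ := h
    simp only [mul_assoc, kz_L]
    rw [lemLFL r (kzpow t)]
    exact mem_efl s r t

lemma closure_E : ∀ m ∈ B0 ∪ B1 ∪ B2 ∪ B3 ∪ B4 ∪ B5, m * Ee ∈ SS := by
  intro m hm
  rcases hm with ((((h | h) | h) | h) | h) | h
  · obtain ⟨r, s, t, rfl⟩ := h
    simp only [mul_assoc]
    obtain ⟨c, hc⟩ := kzE' t
    rw [hc]
    simp only [mul_smul_comm, pow_mul_cons]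
    exact SS.smul_mem c (memB0 r (s+1) t)
  · obtain ⟨r, s, t, rfl⟩ := h
    simp only [mul_assoc]
    obtain ⟨c, hc⟩ := kzE' t
    rw [hc]
    simp only [mul_smul_comm, pow_mul_cons]
    exact SS.smul_mem c (memB1 r (s+1) t)
  · obtain ⟨r, s, t, h2, rfl⟩ := h
    simp only [mul_assoc]
    obtain ⟨c, hc⟩ := kzE' t
    rw [hc]
    simp only [mul_smul_comm]
    refine SS.smul_mem c ?_
    rw [EsLE_expand s (kzpow t)]
    simp only [msmul_add, mul_add, mul_smul_comm, msmul_smul]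
    refine SS.add_mem (SS.smul_mem _ ?_) (SS.smul_mem _ ?_)
    · exact memB2 r (s+1) t (pair_ne (by omega))
    · rcases Nat.eq_zero_or_pos r with hr | hr
      · subst hr
        simpa using memB1 0 (s+1) t
      · exact memB4 r (s+1) t hr (by omega)
  · obtain ⟨r, s, t, hr, hs, rfl⟩ := h
    simp only [mul_assoc]
    obtain ⟨c, hc⟩ := kzE' t
    rw [hc]
    simp only [mul_smul_comm]
    refine SS.smul_mem c ?_
    rw [EsLE_expand s (kzpow t)]
    simp only [msmul_add, mul_add, mul_smul_comm, msmul_smul]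
    refine SS.add_mem (SS.smul_mem _ ?_) (SS.smul_mem _ ?_)
    · exact memB3 r (s+1) t hr (by omega)
    · rw [lemLFL r (Ee^(s+1) * kzpow t)]
      exact memB4 r (s+1) t hr (by omega)
  · obtain ⟨r, s, t, hr, hs, rfl⟩ := h
    simp only [mul_assoc]
    obtain ⟨c, hc⟩ := kzE' t
    rw [hc]
    simp only [mul_smul_comm, pow_mul_cons]
    exact SS.smul_mem c (memB4 r (s+1) t hr (by omega))
  · obtain ⟨r, s, t, hr, hs, rfl⟩ := h
    simp only [mul_assoc]
    obtain ⟨c, hc⟩ := kzE' t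
    rw [hc]
    simp only [mul_smul_comm]
    refine SS.smul_mem c ?_
    obtain ⟨r', rfl⟩ : ∃ r', r = r'+1 := ⟨r-1, by omega⟩
    obtain ⟨a, b, hab⟩ := cFE r'
    rw [hab (kzpow t), Kk_kz, K'_kz]
    simp only [mul_add, mul_smul_comm]
    refine SS.add_mem (SS.add_mem ?_ (SS.smul_mem _ ?_)) (SS.smul_mem _ ?_)
    · rw [EsLE_expand s (Ff^(r'+1) * kzpow t)]
      simp only [msmul_add, msmul_smul]
      refine SS.add_mem (SS.smul_mem _ ?_) (SS.smul_mem _ ?_)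
      · exact memB5 (r'+1) (s+1) t (by omega) (by omega)
      · exact mem_lefk (s+1) (r'+1) t
    · rcases Nat.eq_zero_or_pos r' with h0 | h0
      · subst h0
        simpa using memB2 0 s (1+t) (pair_ne hs)
      · exact memB5 r' s (1+t) h0 hs
    · rcases Nat.eq_zero_or_pos r' with h0 | h0
      · subst h0
        simpa using memB2 0 s (-1+t) (pair_ne hs)
      · exact memB5 r' s (-1+t) h0 hs

lemma fefSP (r s : ℕ) (t : ℤ) : Ff^r * (Ee^s * (Ff * kzpow t)) ∈ SP := by
  rcases Nat.eq_zero_or_pos s with hs | hs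
  · subst hs
    simp only [pow_zero, one_mul, pow_mul_cons]
    simpa using memP (r+1) 0 t
  · obtain ⟨s', rfl⟩ : ∃ s', s = s'+1 := ⟨s-1, by omega⟩
    obtain ⟨a, b, hab⟩ := cEF s'
    rw [hab (kzpow t), Kk_kz, K'_kz]
    simp only [mul_add, mul_smul_comm, pow_mul_cons]
    refine SP.add_mem (SP.add_mem ?_ (SP.smul_mem _ ?_)) (SP.smul_mem _ ?_)
    · exact memP (r+1) (s'+1) t
    · exact memP r s' (1+t)
    · exact memP r s' (-1+t)

lemma closure_F : ∀ m ∈ B0 ∪ B1 ∪ B2 ∪ B3 ∪ B4 ∪ B5, m * Ff ∈ SS := by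
  intro m hm
  rcases hm with ((((h | h) | h) | h) | h) | h
  · obtain ⟨r, s, t, rfl⟩ := h
    simp only [mul_assoc]
    obtain ⟨c, hc⟩ := kzF' t
    rw [hc]
    simp only [mul_smul_comm]
    exact SS.smul_mem c (SP_le_SS (fefSP r s t))
  · obtain ⟨r, s, t, rfl⟩ := h
    simp only [mul_assoc]
    obtain ⟨c, hc⟩ := kzF' t
    rw [hc]
    simp only [mul_smul_comm]
    exact SS.smul_mem c (L_SP_mem _ (fefSP r s t))
  · obtain ⟨r, s, t, h2, rfl⟩ := h
    simp only [mul_assoc]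
    obtain ⟨c, hc⟩ := kzF' t
    rw [hc]
    simp only [mul_smul_comm]
    exact SS.smul_mem c (B2f r s t)
  · obtain ⟨r, s, t, hr, hs, rfl⟩ := h
    simp only [mul_assoc]
    obtain ⟨c, hc⟩ := kzF' t
    rw [hc]
    simp only [mul_smul_comm]
    exact SS.smul_mem c (lmul_SS _ (B2f r s t))
  · obtain ⟨r, s, t, hr, hs, rfl⟩ := h
    simp only [mul_assoc]
    obtain ⟨c, hc⟩ := kzF' t
    rw [hc]
    simp only [mul_smul_comm]
    refine SS.smul_mem c ?_
    obtain ⟨s', rfl⟩ : ∃ s', s = s'+1 := ⟨s-1, by omega⟩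
    obtain ⟨a, b, hab⟩ := cEF s'
    rw [hab (kzpow t), Kk_kz, K'_kz]
    simp only [mul_add, mul_smul_comm]
    refine SS.add_mem (SS.add_mem ?_ (SS.smul_mem _ ?_)) (SS.smul_mem _ ?_)
    · rw [FsLF_expand r (Ee^(s'+1) * kzpow t)]
      simp only [msmul_add, msmul_smul]
      refine SS.add_mem (SS.smul_mem _ ?_) (SS.smul_mem _ ?_)
      · exact memB1 (r+1) (s'+1) t
      · exact memB4 (r+1) (s'+1) t (by omega) (by omega)
    · rcases Nat.eq_zero_or_pos s' with h0 | h0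
      · subst h0
        simpa using memB2 r 0 (1+t) (pair_ne' hr)
      · exact memB4 r s' (1+t) hr h0
    · rcases Nat.eq_zero_or_pos s' with h0 | h0
      · subst h0
        simpa using memB2 r 0 (-1+t) (pair_ne' hr)
      · exact memB4 r s' (-1+t) hr h0
  · obtain ⟨r, s, t, hr, hs, rfl⟩ := h
    simp only [mul_assoc]
    obtain ⟨c, hc⟩ := kzF' t
    rw [hc]
    simp only [mul_smul_comm, pow_mul_cons]
    exact SS.smul_mem c (memB5 (r+1) s t (by omega) hs)

lemma SS_mul_E : ∀ y ∈ SS, y * Ee ∈ SS := spanclosedR Ee closure_E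
lemma SS_mul_F : ∀ y ∈ SS, y * Ff ∈ SS := spanclosedR Ff closure_F
lemma SS_mul_K : ∀ y ∈ SS, y * Kk ∈ SS := spanclosedR Kk closure_K
lemma SS_mul_K' : ∀ y ∈ SS, y * Kk' ∈ SS := spanclosedR Kk' closure_K'
lemma SS_mul_L : ∀ y ∈ SS, y * Ll ∈ SS := spanclosedR Ll closure_L

end Closure

/-- Proposition 4.5: the PBW monomials span `MU_v(2)` over `K`. -/
theorem pbw_spans :
    Submodule.span K (B0 ∪ B1 ∪ B2 ∪ B3 ∪ B4 ∪ B5) = ⊤ := by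
  have hone : (1 : MU2) ∈ SS := by simpa using memB0 0 0 0
  have key : ∀ y : FreeAlgebra K G5, ∀ z ∈ SS, z * (RingQuot.mkAlgHom K Rel y) ∈ SS := by
    intro y
    induction y using FreeAlgebra.induction with
    | grade0 r =>
        intro z hz
        rw [AlgHom.commutes, ← Algebra.commutes, ← Algebra.smul_def]
        exact SS.smul_mem r hz
    | grade1 g =>
        cases g with
        | e => exact SS_mul_E
        | f => exact SS_mul_F
        | k => exact SS_mul_K
        | k' => exact SS_mul_K'
        | l => exact SS_mul_L
    | mul a b iha ihb =>
        intro z hz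
        rw [map_mul, ← mul_assoc]
        exact ihb _ (iha z hz)
    | add a b iha ihb =>
        intro z hz
        rw [map_add, mul_add]
        exact SS.add_mem (iha z hz) (ihb z hz)
  rw [show Submodule.span K (B0 ∪ B1 ∪ B2 ∪ B3 ∪ B4 ∪ B5) = SS from rfl, eq_top_iff]
  rintro x -
  obtain ⟨y, rfl⟩ := RingQuot.mkAlgHom_surjective K Rel x
  simpa using key y 1 hone

end

end MirabolicSL2
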